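/- arXiv:2210.13644 — 2 statements merged into one kernel-verified Lean document; each statement's English description precedes it below -/
import Mathlib

section
/- Let (m₁,m₂,m₃,ξ,p) be a collision solution of the reduced two-body system on [t₀, t*), i.e. ξ(t) → +∞ as t → t*⁻. Then the growth of |p| does not exceed that of √ξ: there exist M > 0 and t₁ ∈ [t₀, t*) such that |p(t)| ≤ M·√(ξ(t)) for all t ∈ [t₁, t*). -/
open Filter Set

/-- The filter of approach `t → t*⁻`, where `t* ∈ ℝ ∪ {±∞}` is encoded as an `EReal`:
for finite `t*` this is `𝓝[<] t*`, and for `t* = ⊤` it is `atTop`. -/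
noncomputable def approachFilter (tstar : EReal) : Filter ℝ :=
  Filter.comap (fun t : ℝ => (t : EReal)) (nhdsWithin tstar (Set.Iio tstar))

/-!
The Casimir `m₁² + m₂² + m₃²` and the energy `p² − p m₁ − ξ − m₂ m₃ ξ + m₃² ξ²` are first
integrals of the system. The Casimir bounds `|m₁|` and `m₂ m₃`, so once `ξ ≥ 1` conservation of
energy gives `p² ≤ B |p| + K ξ` with constants `B, K`, whence `|p| ≤ B + √(K ξ) ≤ (B + √K) √ξ`.
-/

lemma exists_forall_of_eventually_approachFilter {t0 : ℝ} {tstar : EReal}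
    (ht0 : (t0 : EReal) < tstar) {P : ℝ → Prop} (h : ∀ᶠ t in approachFilter tstar, P t) :
    ∃ t1 : ℝ, (t0 ≤ t1 ∧ (t1 : EReal) < tstar) ∧
      ∀ t : ℝ, t1 ≤ t → (t : EReal) < tstar → P t := by
  obtain ⟨l, hl, hsub⟩ := (mem_nhdsLT_iff_exists_Ioo_subset' ht0).mp (eventually_comap.mp h)
  obtain ⟨t1, hlt1, ht1⟩ := EReal.lt_iff_exists_real_btwn.mp (max_lt hl ht0)
  refine ⟨t1, ⟨EReal.coe_le_coe_iff.mp ((le_max_right _ _).trans hlt1.le), ht1⟩, fun t ht htt => ?_⟩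
  exact hsub ⟨(le_max_left _ _).trans_lt (hlt1.trans_le (EReal.coe_le_coe_iff.mpr ht)), htt⟩ t rfl

lemma eq_of_hasDerivAt_eq_zero {f : ℝ → ℝ} {t0 : ℝ} {tstar : EReal}
    (hf : ∀ t : ℝ, t0 ≤ t → (t : EReal) < tstar → HasDerivAt f 0 t)
    {s t : ℝ} (hs : t0 ≤ s) (hst : s ≤ t) (ht : (t : EReal) < tstar) : f t = f s := by
  have hderiv : ∀ x ∈ Icc s t, HasDerivWithinAt f 0 (Icc s t) x := fun x hx =>
    (hf x (hs.trans hx.1) ((EReal.coe_le_coe_iff.mpr hx.2).trans_lt ht)).hasDerivWithinAt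
  have h := (convex_Icc s t).norm_image_sub_le_of_norm_hasDerivWithin_le hderiv
    (fun _ _ => norm_zero.le) (left_mem_Icc.2 hst) (right_mem_Icc.2 hst)
  rwa [zero_mul, norm_le_zero_iff, sub_eq_zero] at h

def casimir (m1 m2 m3 : ℝ) : ℝ := m1 ^ 2 + m2 ^ 2 + m3 ^ 2

def energy (m1 m2 m3 xi p : ℝ) : ℝ :=
  p ^ 2 - p * m1 - xi - m2 * m3 * xi + m3 ^ 2 * xi ^ 2

lemma casimir_nonneg (m1 m2 m3 : ℝ) : 0 ≤ casimir m1 m2 m3 := by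
  unfold casimir
  positivity

section FirstIntegrals

variable {m1 m2 m3 xi p : ℝ → ℝ} {t : ℝ}

lemma hasDerivAt_casimir
    (h1 : HasDerivAt m1 (xi t * (-(m2 t)^2 + (m3 t)^2 + 2 * m2 t * m3 t * xi t)) t)
    (h2 : HasDerivAt m2 (m1 t * m2 t * xi t - m3 t * p t - 2 * m1 t * m3 t * (xi t)^2) t)
    (h3 : HasDerivAt m3 (m2 t * p t - m1 t * m3 t * xi t) t) :
    HasDerivAt (fun t => casimir (m1 t) (m2 t) (m3 t)) 0 t := by
  refine (((h1.pow 2).add (h2.pow 2)).add (h3.pow 2) :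
    HasDerivAt (fun t => m1 t ^ 2 + m2 t ^ 2 + m3 t ^ 2) _ t).congr_deriv ?_
  push_cast
  ring

lemma hasDerivAt_energy
    (h1 : HasDerivAt m1 (xi t * (-(m2 t)^2 + (m3 t)^2 + 2 * m2 t * m3 t * xi t)) t)
    (h2 : HasDerivAt m2 (m1 t * m2 t * xi t - m3 t * p t - 2 * m1 t * m3 t * (xi t)^2) t)
    (h3 : HasDerivAt m3 (m2 t * p t - m1 t * m3 t * xi t) t)
    (h4 : HasDerivAt xi (-((xi t)^2 + 1) * (2 * p t - m1 t)) t)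
    (h5 : HasDerivAt p (-((xi t)^2 + 1) * (1 + m2 t * m3 t - 2 * (m3 t)^2 * xi t)) t) :
    HasDerivAt (fun t => energy (m1 t) (m2 t) (m3 t) (xi t) (p t)) 0 t := by
  refine (((((h5.pow 2).sub (h5.mul h1)).sub h4).sub ((h2.mul h3).mul h4)).add
    ((h3.pow 2).mul (h4.pow 2)) : HasDerivAt (fun t => p t ^ 2 - p t * m1 t - xi t
      - m2 t * m3 t * xi t + m3 t ^ 2 * xi t ^ 2) _ t).congr_deriv ?_
  push_cast [Pi.mul_apply, Pi.pow_apply]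
  ring

end FirstIntegrals

lemma le_add_of_sq_le_mul_add_sq {q B D : ℝ} (hB : 0 ≤ B) (hD : 0 ≤ D)
    (h : q ^ 2 ≤ q * B + D ^ 2) : q ≤ B + D := by
  by_contra! hq
  nlinarith [mul_le_mul_of_nonneg_right hq.le hD]

lemma abs_le_mul_sqrt_of_one_le {m1 m2 m3 xi p : ℝ} (hxi : 1 ≤ xi) :
    |p| ≤ (√(casimir m1 m2 m3) + √(|energy m1 m2 m3 xi p| + 1 + casimir m1 m2 m3)) * √xi := by
  set C := casimir m1 m2 m3 with hC
  set E := energy m1 m2 m3 xi p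
  set K := |E| + 1 + C with hK
  have hC0 : 0 ≤ C := casimir_nonneg m1 m2 m3
  have hm1 : |m1| ≤ √C :=
    Real.abs_le_sqrt (by rw [hC, casimir]; nlinarith [sq_nonneg m2, sq_nonneg m3])
  have hm23 : m2 * m3 ≤ C := by rw [hC, casimir]; nlinarith [sq_nonneg (m2 - m3), sq_nonneg m1]
  have hpm1 : p * m1 ≤ |p| * √C :=
    (le_abs_self _).trans ((abs_mul p m1).trans_le (mul_le_mul_of_nonneg_left hm1 (abs_nonneg p)))
  have hKxi : K * xi = (√K * √xi) ^ 2 := by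
    rw [mul_pow, Real.sq_sqrt (by positivity), Real.sq_sqrt (by linarith)]
  -- The only term of the energy not controlled by the Casimir, `m₃² ξ²`, is nonnegative.
  have hp2 : |p| ^ 2 ≤ |p| * √C + (√K * √xi) ^ 2 := by
    have hE_le : p ^ 2 - p * m1 - xi - m2 * m3 * xi + m3 ^ 2 * xi ^ 2 ≤ |E| := le_abs_self E
    rw [sq_abs, ← hKxi, hK]
    nlinarith [sq_nonneg (m3 * xi), mul_le_mul_of_nonneg_right hm23 (by linarith : 0 ≤ xi),
      abs_nonneg E]
  calc |p| ≤ √C + √K * √xi := le_add_of_sq_le_mul_add_sq (by positivity) (by positivity) hp2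
    _ ≤ √C * √xi + √K * √xi := by
        gcongr; exact le_mul_of_one_le_right (Real.sqrt_nonneg C) (Real.one_le_sqrt.mpr hxi)
    _ = (√C + √K) * √xi := by ring

/-- Along a collision solution of the reduced two-body system (`ξ(t) → +∞` as `t → t*⁻`),
the growth of `|p|` does not exceed that of `√ξ`: there are `M > 0` and `t₁ ∈ [t₀, t*)` with
`|p(t)| ≤ M·√(ξ(t))` for all `t ∈ [t₁, t*)`. -/
theorem p_le_sqrt_xi_at_collision
    (t0 : ℝ) (tstar : EReal) (ht0 : (t0 : EReal) < tstar)
    (m1 m2 m3 xi p : ℝ → ℝ)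
    (hm1 : ∀ t : ℝ, t0 ≤ t → (t : EReal) < tstar →
      HasDerivAt m1 (xi t * (-(m2 t)^2 + (m3 t)^2 + 2 * m2 t * m3 t * xi t)) t)
    (hm2 : ∀ t : ℝ, t0 ≤ t → (t : EReal) < tstar →
      HasDerivAt m2 (m1 t * m2 t * xi t - m3 t * p t - 2 * m1 t * m3 t * (xi t)^2) t)
    (hm3 : ∀ t : ℝ, t0 ≤ t → (t : EReal) < tstar →
      HasDerivAt m3 (m2 t * p t - m1 t * m3 t * xi t) t)
    (hxi : ∀ t : ℝ, t0 ≤ t → (t : EReal) < tstar →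
      HasDerivAt xi (-((xi t)^2 + 1) * (2 * p t - m1 t)) t)
    (hp : ∀ t : ℝ, t0 ≤ t → (t : EReal) < tstar →
      HasDerivAt p (-((xi t)^2 + 1) * (1 + m2 t * m3 t - 2 * (m3 t)^2 * xi t)) t)
    (hcoll : Tendsto xi (approachFilter tstar) atTop) :
    ∃ M > (0 : ℝ), ∃ t1 : ℝ, (t0 ≤ t1 ∧ (t1 : EReal) < tstar) ∧
      ∀ t : ℝ, t1 ≤ t → (t : EReal) < tstar → |p t| ≤ M * Real.sqrt (xi t) := by
  obtain ⟨t1, ⟨ht01, ht1⟩, hxi1⟩ :=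
    exists_forall_of_eventually_approachFilter ht0 (hcoll.eventually (eventually_ge_atTop 1))
  set C := casimir (m1 t1) (m2 t1) (m3 t1)
  set E := energy (m1 t1) (m2 t1) (m3 t1) (xi t1) (p t1)
  refine ⟨√C + √(|E| + 1 + C), by positivity [casimir_nonneg (m1 t1) (m2 t1) (m3 t1)], t1,
    ⟨ht01, ht1⟩, fun t ht htt => ?_⟩
  have hCt : casimir (m1 t) (m2 t) (m3 t) = C := eq_of_hasDerivAt_eq_zero
    (fun s hs hss => hasDerivAt_casimir (hm1 s hs hss) (hm2 s hs hss) (hm3 s hs hss)) ht01 ht htt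
  have hEt : energy (m1 t) (m2 t) (m3 t) (xi t) (p t) = E := eq_of_hasDerivAt_eq_zero
    (fun s hs hss => hasDerivAt_energy (hm1 s hs hss) (hm2 s hs hss) (hm3 s hs hss)
      (hxi s hs hss) (hp s hs hss)) ht01 ht htt
  simpa only [hCt, hEt] using abs_le_mul_sqrt_of_one_le (m1 := m1 t) (m2 := m2 t) (m3 := m3 t)
    (p := p t) (hxi1 t ht htt)
end

section
/- Let (m₁,m₂,m₃,ξ,p) be a collision solution of the reduced two-body system on [t₀, t*) with t* < ∞ and ξ(t) → +∞ as t → t*⁻. Then p admits the asymptotic expansion p = m₁/2 − √ξ·(1 + O(1/ξ)): there exist M > 0 and t₁ ∈ [t₀, t*) such that |p(t) − m₁(t)/2 + √(ξ(t))| · √(ξ(t)) ≤ M for all t ∈ [t₁, t*). -/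
open Filter Set Topology

/-!
Put `s = m₁/2 - p` and `v = m₃ξ - m₂/2`, so that `ξ' = 2s(ξ² + 1)`. The angular momentum
`m₁² + m₂² + m₃²` and the energy are conserved, and the energy reads `s² + v² = ξ + O(1)`.
Once `ξ` is large, `{s ≤ 1}` is invariant and on it `s + ξ/8` decreases, contradicting
`s² ≤ ξ + O(1)` as `ξ → ∞`; hence `s > 1`. Then `{v² ≥ 1}` is invariant and on it
`(v²)'/v² ≥ 3sξ = (3/4)(log (ξ² + 1))'`, so `v² ≳ ξ^{3/2}`, again contradicting
`v² ≤ ξ + O(1)`; hence `v² < 1`. So `ξ - s² = O(1)`, and since `s > 0` this gives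
`|√ξ - s|·√ξ ≤ |ξ - s²| = O(1)`.
-/

section Calculus

variable {f g f' g' : ℝ → ℝ} {D : Set ℝ}

theorem monotoneOn_of_hasDerivAt_nonneg (hD : Convex ℝ D) (hf : ∀ x ∈ D, HasDerivAt f (f' x) x)
    (hf' : ∀ x ∈ D, 0 ≤ f' x) : MonotoneOn f D :=
  monotoneOn_of_hasDerivWithinAt_nonneg hD (fun x hx => (hf x hx).continuousAt.continuousWithinAt)
    (fun x hx => (hf x (interior_subset hx)).hasDerivWithinAt)
    (fun x hx => hf' x (interior_subset hx))

theorem antitoneOn_of_hasDerivAt_nonpos (hD : Convex ℝ D) (hf : ∀ x ∈ D, HasDerivAt f (f' x) x)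
    (hf' : ∀ x ∈ D, f' x ≤ 0) : AntitoneOn f D :=
  antitoneOn_of_hasDerivWithinAt_nonpos hD (fun x hx => (hf x hx).continuousAt.continuousWithinAt)
    (fun x hx => (hf x (interior_subset hx)).hasDerivWithinAt)
    (fun x hx => hf' x (interior_subset hx))

theorem eq_of_hasDerivAt_zero (hD : Convex ℝ D) (hf : ∀ x ∈ D, HasDerivAt f 0 x) {x y : ℝ}
    (hx : x ∈ D) (hy : y ∈ D) (hxy : x ≤ y) : f x = f y :=
  le_antisymm (monotoneOn_of_hasDerivAt_nonneg hD hf (fun _ _ => le_rfl) hx hy hxy)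
    (antitoneOn_of_hasDerivAt_nonpos hD hf (fun _ _ => le_rfl) hx hy hxy)

theorem monotoneOn_div_of_hasDerivAt (hD : Convex ℝ D) (hf : ∀ x ∈ D, HasDerivAt f (f' x) x)
    (hg : ∀ x ∈ D, HasDerivAt g (g' x) x) (hg₀ : ∀ x ∈ D, g x ≠ 0)
    (hfg : ∀ x ∈ D, f x * g' x ≤ f' x * g x) : MonotoneOn (fun x => f x / g x) D :=
  monotoneOn_of_hasDerivAt_nonneg hD (fun x hx => (hf x hx).div (hg x hx) (hg₀ x hx))
    (fun x hx => div_nonneg (sub_nonneg.2 (hfg x hx)) (sq_nonneg _))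

variable {a b c : ℝ}

theorem le_of_hasDerivAt_neg_of_eq (hf : ∀ x ∈ Ico a b, HasDerivAt f (f' x) x) (ha : f a ≤ c)
    (hc : ∀ x ∈ Ico a b, f x = c → f' x < 0) : ∀ x ∈ Ico a b, f x ≤ c := by
  intro x hx
  have hsub : Icc a x ⊆ Ico a b := fun y hy => ⟨hy.1, hy.2.trans_lt hx.2⟩
  refine image_le_of_deriv_right_lt_deriv_boundary (B := fun _ => c) (B' := 0)
    (fun y hy => (hf y (hsub hy)).continuousAt.continuousWithinAt)
    (fun y hy => (hf y (hsub (Ico_subset_Icc_self hy))).hasDerivWithinAt) ha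
    (fun _ => hasDerivAt_const _ _)
    (fun y hy => hc y (hsub (Ico_subset_Icc_self hy))) ⟨hx.1, le_rfl⟩

theorem le_of_hasDerivAt_pos_of_eq (hf : ∀ x ∈ Ico a b, HasDerivAt f (f' x) x) (ha : c ≤ f a)
    (hc : ∀ x ∈ Ico a b, f x = c → 0 < f' x) : ∀ x ∈ Ico a b, c ≤ f x := by
  have := le_of_hasDerivAt_neg_of_eq (f := -f) (f' := -f') (c := -c) (fun x hx => (hf x hx).neg)
    (neg_le_neg ha) (fun x hx hx' => neg_neg_of_pos (hc x hx (neg_inj.1 hx')))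
  exact fun x hx => neg_le_neg_iff.1 (this x hx)

theorem exists_Ico_forall_ge_of_tendsto (hab : a < b) (hf : Tendsto f (𝓝[<] b) atTop) (c : ℝ) :
    ∃ t ∈ Ico a b, ∀ x ∈ Ico t b, c ≤ f x := by
  obtain ⟨t, ht, hsub⟩ := mem_nhdsLT_iff_exists_Ico_subset.1
    ((hf.eventually_ge_atTop c).and (Ico_mem_nhdsLT hab))
  refine ⟨max a t, ⟨le_max_left _ _, max_lt hab ht⟩, fun x hx => (hsub ?_).1⟩
  exact ⟨(le_max_right _ _).trans hx.1, hx.2⟩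

theorem exists_Ico_gt_of_tendsto (hab : a < b) (hf : Tendsto f (𝓝[<] b) atTop) (c : ℝ) :
    ∃ x ∈ Ico a b, c < f x := by
  have hIco : ∀ᶠ x in 𝓝[<] b, x ∈ Ico a b := Ico_mem_nhdsLT hab
  exact (hIco.and (hf.eventually_gt_atTop c)).exists

end Calculus

section Collision

variable {a b B : ℝ} {s s' y y' xi : ℝ → ℝ}

theorem forall_one_lt_of_tendsto_atTop (hs : ∀ t ∈ Ico a b, HasDerivAt s (s' t) t)
    (hxi : ∀ t ∈ Ico a b, HasDerivAt xi (2 * s t * (xi t ^ 2 + 1)) t)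
    (hcoll : Tendsto xi (𝓝[<] b) atTop) (hxi₁ : ∀ t ∈ Ico a b, 1 ≤ xi t)
    (hsq : ∀ t ∈ Ico a b, s t ^ 2 ≤ xi t + B)
    (hdec : ∀ t ∈ Ico a b, -8 ≤ s t → s t ≤ 1 → s' t ≤ -xi t ^ 2 / 2)
    (hgrow : ∀ t ∈ Ico a b, s' t ≤ 2 * xi t ^ 2) :
    ∀ t ∈ Ico a b, 1 < s t := by
  intro t₂ ht₂
  by_contra! hs₂
  have hsub : Ico t₂ b ⊆ Ico a b := Ico_subset_Ico_left ht₂.1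
  have htrap : ∀ t ∈ Ico t₂ b, s t ≤ 1 :=
    le_of_hasDerivAt_neg_of_eq (fun t ht => hs t (hsub ht)) hs₂ fun t ht hst => by
      nlinarith [hdec t (hsub ht) (by linarith) hst.le, hxi₁ t (hsub ht)]
  -- On `s ≤ 1` the drift of `s` beats the growth of `ξ/8`.
  have hanti : AntitoneOn (fun t => s t + xi t / 8) (Ico t₂ b) := by
    refine antitoneOn_of_hasDerivAt_nonpos (convex_Ico _ _)
      (fun t ht => (hs t (hsub ht)).add ((hxi t (hsub ht)).div_const 8)) fun t ht => ?_
    have h1 := hxi₁ t (hsub ht)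
    have h2 := htrap t ht
    rcases le_or_gt (-8) (s t) with h8 | h8
    · nlinarith [hdec t (hsub ht) h8 h2]
    · nlinarith [hgrow t (hsub ht)]
  obtain ⟨C, hC⟩ : ∃ C, s t₂ + xi t₂ / 8 = C := ⟨_, rfl⟩
  obtain ⟨t, ht, hlarge⟩ := exists_Ico_gt_of_tendsto ht₂.2 hcoll (16 * |C| + 512 * |B| + 512)
  have hst : s t + xi t / 8 ≤ C := hC ▸ hanti ⟨le_rfl, ht₂.2⟩ ht ht.1
  have hneg : xi t / 16 ≤ -s t := by linarith [le_abs_self C, abs_nonneg B]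
  have hsq' : (xi t / 16) * (xi t / 16) ≤ s t ^ 2 := by
    nlinarith [mul_self_le_mul_self (by linarith [hxi₁ t (hsub ht)]) hneg]
  have hx₁ := hxi₁ t (hsub ht)
  nlinarith [hsq t (hsub ht), le_abs_self B, abs_nonneg C,
    mul_nonneg (abs_nonneg B) (sub_nonneg.2 hx₁)]

theorem forall_lt_one_of_tendsto_atTop (hy : ∀ t ∈ Ico a b, HasDerivAt y (y' t) t)
    (hxi : ∀ t ∈ Ico a b, HasDerivAt xi (2 * s t * (xi t ^ 2 + 1)) t)
    (hcoll : Tendsto xi (𝓝[<] b) atTop) (hxi₁ : ∀ t ∈ Ico a b, 1 ≤ xi t)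
    (hs : ∀ t ∈ Ico a b, 0 < s t) (hy_le : ∀ t ∈ Ico a b, y t ≤ 2 * xi t)
    (hgrow : ∀ t ∈ Ico a b, 1 ≤ y t → 3 * s t * xi t * y t ≤ y' t) :
    ∀ t ∈ Ico a b, y t < 1 := by
  intro t₂ ht₂
  by_contra! hy₂
  have hsub : Ico t₂ b ⊆ Ico a b := Ico_subset_Ico_left ht₂.1
  have htrap : ∀ t ∈ Ico t₂ b, 1 ≤ y t :=
    le_of_hasDerivAt_pos_of_eq (fun t ht => hy t (hsub ht)) hy₂ fun t ht hyt => by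
      have := hgrow t (hsub ht) hyt.ge
      have := mul_pos (hs t (hsub ht)) (zero_lt_one.trans_le (hxi₁ t (hsub ht)))
      nlinarith
  -- `(y⁴)' ≥ 12sξ·y⁴` while `((ξ² + 1)³)' = 12sξ·(ξ² + 1)³`.
  have hmono : MonotoneOn (fun t => y t ^ 4 / (xi t ^ 2 + 1) ^ 3) (Ico t₂ b) := by
    refine monotoneOn_div_of_hasDerivAt (convex_Ico _ _) (fun t ht => (hy t (hsub ht)).pow 4)
      (fun t ht => (((hxi t (hsub ht)).pow 2).add_const 1).pow 3) (fun t _ => by positivity)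
      fun t ht => ?_
    have hy₁ := htrap t ht
    have key : 4 * y t ^ 3 * (xi t ^ 2 + 1) ^ 3 * (3 * s t * xi t * y t)
        ≤ 4 * y t ^ 3 * (xi t ^ 2 + 1) ^ 3 * y' t :=
      mul_le_mul_of_nonneg_left (hgrow t (hsub ht) hy₁) (by positivity)
    simp only [Pi.pow_apply, Nat.cast_ofNat]
    linear_combination key
  set c := y t₂ ^ 4 / (xi t₂ ^ 2 + 1) ^ 3
  have hc : 0 < c := div_pos (pow_pos (by linarith) 4) (by positivity)
  obtain ⟨t, ht, hlarge⟩ := exists_Ico_gt_of_tendsto ht₂.2 hcoll (16 / c)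
  have hct : c * (xi t ^ 2 + 1) ^ 3 ≤ y t ^ 4 :=
    (le_div_iff₀ (by positivity)).1 (hmono ⟨le_rfl, ht₂.2⟩ ht ht.1)
  have hx₁ := hxi₁ t (hsub ht)
  have hyx : y t ^ 4 ≤ (2 * xi t) ^ 4 :=
    pow_le_pow_left₀ (by linarith [htrap t ht]) (hy_le t (hsub ht)) 4
  have h16 : 16 < c * xi t := by rwa [div_lt_iff₀ hc, mul_comm] at hlarge
  have hx₆ : c * (xi t ^ 2) ^ 3 ≤ c * (xi t ^ 2 + 1) ^ 3 :=
    mul_le_mul_of_nonneg_left (pow_le_pow_left₀ (by positivity) (by linarith) 3) hc.le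
  have hcx : c * xi t ^ 2 ≤ 16 :=
    le_of_mul_le_mul_right (a := xi t ^ 4) (by nlinarith) (by positivity)
  nlinarith

end Collision

-- At `x = ξ`, the left-hand sides below are the derivatives of `s` and `v²` along a solution
-- (`IsReducedTwoBodySolution.hasDerivAt_s`, `IsReducedTwoBodySolution.hasDerivAt_v_sq`).
section Estimates

variable {m1 m2 m3 x s v L B : ℝ}

theorem sDeriv_le_neg_sq_div_two (hm2 : m2 ^ 2 ≤ L) (hm3 : m3 ^ 2 ≤ L) (hB : 0 ≤ B)
    (hx : 258 + 2 * L + 4 * B ≤ x) (hK : x - B ≤ s ^ 2 + v ^ 2) (hs : s ^ 2 ≤ 64) :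
    x ^ 2 + 1 - 2 * x * v ^ 2 + m2 * m3 - 3 / 2 * x * m3 ^ 2 ≤ -x ^ 2 / 2 := by
  have hL : 0 ≤ L := (sq_nonneg m2).trans hm2
  have hx₁ : 1 ≤ x := by nlinarith
  have hv : x - B - 64 ≤ v ^ 2 := by linarith
  nlinarith [mul_le_mul_of_nonneg_left hv (by linarith : (0 : ℝ) ≤ 2 * x),
    mul_le_mul_of_nonneg_left hx (by linarith : (0 : ℝ) ≤ x), sq_nonneg (m2 - m3),
    mul_nonneg (by linarith : (0 : ℝ) ≤ x) (sq_nonneg m3), mul_nonneg hL (sub_nonneg.2 hx₁)]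

theorem sDeriv_le_two_mul_sq (hm2 : m2 ^ 2 ≤ L) (hm3 : m3 ^ 2 ≤ L) (hx : 1 + L ≤ x) :
    x ^ 2 + 1 - 2 * x * v ^ 2 + m2 * m3 - 3 / 2 * x * m3 ^ 2 ≤ 2 * x ^ 2 := by
  have hx₁ : 1 ≤ x := by nlinarith [(sq_nonneg m2).trans hm2]
  nlinarith [mul_nonneg (by linarith : (0 : ℝ) ≤ x) (sq_nonneg v), sq_nonneg (m2 - m3),
    mul_nonneg (by linarith : (0 : ℝ) ≤ x) (sq_nonneg m3)]

theorem mul_le_vSqDeriv (hm1 : m1 ^ 2 ≤ L) (hm3 : m3 ^ 2 ≤ L) (hx : 2 + 2 * L ≤ x)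
    (hs : 1 ≤ s) (hv : 1 ≤ v ^ 2) :
    3 * s * x * v ^ 2 ≤ 2 * v * (2 * s * x * v + m3 * (3 * s / 2 + m1 / 4)) := by
  have hL : 0 ≤ L := (sq_nonneg m1).trans hm1
  have h₁ : -(3 / 2 * (1 + L) * v ^ 2) ≤ 3 * (v * m3) := by
    nlinarith [sq_nonneg (v + m3), mul_le_mul_of_nonneg_left hv hL]
  have h₂ : -(L * v ^ 2) ≤ v * (m3 * m1) := by
    have hw : |m3 * m1| ≤ L := by
      rw [abs_le]; constructor <;> nlinarith [sq_nonneg (m3 + m1), sq_nonneg (m3 - m1)]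
    have hv' : |v| ≤ v ^ 2 := by nlinarith [sq_abs v, abs_nonneg v]
    have := neg_abs_le (v * (m3 * m1))
    rw [abs_mul] at this
    nlinarith [mul_le_mul hv' hw (abs_nonneg _) (sq_nonneg v)]
  nlinarith [mul_le_mul_of_nonneg_left h₁ (by linarith : (0 : ℝ) ≤ s),
    mul_le_mul_of_nonneg_left (by linarith : 3 / 2 * (1 + L) + L / 2 ≤ x)
      (mul_nonneg (by linarith : (0 : ℝ) ≤ s) (sq_nonneg v)),
    mul_le_mul_of_nonneg_left (sub_nonneg.2 hs) (mul_nonneg hL (sq_nonneg v))]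

theorem abs_sqrt_sub_mul_sqrt_le {M : ℝ} (hx : 0 ≤ x) (hs : 0 ≤ s) (h : |x - s ^ 2| ≤ M) :
    |√x - s| * √x ≤ M :=
  calc |√x - s| * √x ≤ |√x - s| * |√x + s| := by
        gcongr; rw [abs_of_nonneg (by positivity)]; linarith
    _ = |x - s ^ 2| := by rw [← abs_mul]; congr 1; linear_combination Real.sq_sqrt hx
    _ ≤ M := h

end Estimates

structure IsReducedTwoBodySolution (a b : ℝ) (m1 m2 m3 xi p : ℝ → ℝ) : Prop where
  hasDerivAt_m1 : ∀ t ∈ Ico a b,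
    HasDerivAt m1 (xi t * (-(m2 t)^2 + (m3 t)^2 + 2 * m2 t * m3 t * xi t)) t
  hasDerivAt_m2 : ∀ t ∈ Ico a b,
    HasDerivAt m2 (m1 t * m2 t * xi t - m3 t * p t - 2 * m1 t * m3 t * (xi t)^2) t
  hasDerivAt_m3 : ∀ t ∈ Ico a b, HasDerivAt m3 (m2 t * p t - m1 t * m3 t * xi t) t
  hasDerivAt_xi : ∀ t ∈ Ico a b, HasDerivAt xi (-((xi t)^2 + 1) * (2 * p t - m1 t)) t
  hasDerivAt_p : ∀ t ∈ Ico a b,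
    HasDerivAt p (-((xi t)^2 + 1) * (1 + m2 t * m3 t - 2 * (m3 t)^2 * xi t)) t

namespace IsReducedTwoBodySolution

variable {a b t : ℝ} {m1 m2 m3 xi p : ℝ → ℝ}

theorem angularMomentum_eq (h : IsReducedTwoBodySolution a b m1 m2 m3 xi p)
    (ht : t ∈ Ico a b) : m1 t ^ 2 + m2 t ^ 2 + m3 t ^ 2 = m1 a ^ 2 + m2 a ^ 2 + m3 a ^ 2 := by
  refine (eq_of_hasDerivAt_zero (f := fun τ => m1 τ ^ 2 + m2 τ ^ 2 + m3 τ ^ 2) (convex_Ico a b)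
    (fun τ hτ => ?_) ⟨le_rfl, ht.1.trans_lt ht.2⟩ ht ht.1).symm
  refine ((((h.hasDerivAt_m1 τ hτ).pow 2).add ((h.hasDerivAt_m2 τ hτ).pow 2)).add
    ((h.hasDerivAt_m3 τ hτ).pow 2)).congr_deriv ?_
  push_cast
  ring

theorem energy_eq (h : IsReducedTwoBodySolution a b m1 m2 m3 xi p) (ht : t ∈ Ico a b) :
    p t ^ 2 - m1 t * p t - xi t + m3 t ^ 2 * xi t ^ 2 - m2 t * m3 t * xi t
      = p a ^ 2 - m1 a * p a - xi a + m3 a ^ 2 * xi a ^ 2 - m2 a * m3 a * xi a := by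
  refine (eq_of_hasDerivAt_zero
    (f := fun τ => p τ ^ 2 - m1 τ * p τ - xi τ + m3 τ ^ 2 * xi τ ^ 2 - m2 τ * m3 τ * xi τ)
    (convex_Ico a b) (fun τ hτ => ?_) ⟨le_rfl, ht.1.trans_lt ht.2⟩ ht ht.1).symm
  have h1 := h.hasDerivAt_m1 τ hτ
  have h2 := h.hasDerivAt_m2 τ hτ
  have h3 := h.hasDerivAt_m3 τ hτ
  have h4 := h.hasDerivAt_xi τ hτ
  have h5 := h.hasDerivAt_p τ hτ
  refine (((((h5.pow 2).sub (h1.mul h5)).sub h4).add ((h3.pow 2).mul (h4.pow 2))).sub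
    ((h2.mul h3).mul h4)).congr_deriv ?_
  simp only [Pi.mul_apply, Pi.pow_apply, Nat.cast_ofNat]
  ring

theorem hasDerivAt_xi' (h : IsReducedTwoBodySolution a b m1 m2 m3 xi p) (ht : t ∈ Ico a b) :
    HasDerivAt xi (2 * (m1 t / 2 - p t) * (xi t ^ 2 + 1)) t :=
  (h.hasDerivAt_xi t ht).congr_deriv (by ring)

theorem hasDerivAt_s (h : IsReducedTwoBodySolution a b m1 m2 m3 xi p) (ht : t ∈ Ico a b) :
    HasDerivAt (fun t => m1 t / 2 - p t) (xi t ^ 2 + 1 - 2 * xi t * (m3 t * xi t - m2 t / 2) ^ 2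
      + m2 t * m3 t - 3 / 2 * xi t * m3 t ^ 2) t :=
  (((h.hasDerivAt_m1 t ht).div_const 2).sub (h.hasDerivAt_p t ht)).congr_deriv (by ring)

theorem hasDerivAt_v_sq (h : IsReducedTwoBodySolution a b m1 m2 m3 xi p) (ht : t ∈ Ico a b) :
    HasDerivAt (fun t => (m3 t * xi t - m2 t / 2) ^ 2)
      (2 * (m3 t * xi t - m2 t / 2) * (2 * (m1 t / 2 - p t) * xi t * (m3 t * xi t - m2 t / 2)
        + m3 t * (3 * (m1 t / 2 - p t) / 2 + m1 t / 4))) t := by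
  refine ((((h.hasDerivAt_m3 t ht).mul (h.hasDerivAt_xi t ht)).sub
    ((h.hasDerivAt_m2 t ht).div_const 2)).pow 2).congr_deriv ?_
  simp only [Pi.mul_apply, Pi.sub_apply, Nat.cast_ofNat]
  ring

theorem exists_bound (h : IsReducedTwoBodySolution a b m1 m2 m3 xi p) :
    ∃ L B, 0 ≤ L ∧ 0 ≤ B ∧ ∀ t ∈ Ico a b, m1 t ^ 2 ≤ L ∧ m2 t ^ 2 ≤ L ∧ m3 t ^ 2 ≤ L ∧
      |(m1 t / 2 - p t) ^ 2 + (m3 t * xi t - m2 t / 2) ^ 2 - xi t| ≤ B := by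
  set E := p a ^ 2 - m1 a * p a - xi a + m3 a ^ 2 * xi a ^ 2 - m2 a * m3 a * xi a
  refine ⟨m1 a ^ 2 + m2 a ^ 2 + m3 a ^ 2, |E| + m1 a ^ 2 + m2 a ^ 2 + m3 a ^ 2, by positivity,
    by positivity, fun t ht => ?_⟩
  have hL := h.angularMomentum_eq ht
  have hE := h.energy_eq ht
  have h1 := sq_nonneg (m1 t)
  have h2 := sq_nonneg (m2 t)
  have h3 := sq_nonneg (m3 t)
  have hsv : (m1 t / 2 - p t) ^ 2 + (m3 t * xi t - m2 t / 2) ^ 2 - xi t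
      = E + (m1 t ^ 2 + m2 t ^ 2) / 4 := by linear_combination hE
  refine ⟨by linarith, by linarith, by linarith, ?_⟩
  rw [hsv, abs_le]
  constructor <;> linarith [neg_abs_le E, le_abs_self E]

theorem exists_abs_sub_sq_le (h : IsReducedTwoBodySolution a b m1 m2 m3 xi p) (hab : a < b)
    (hcoll : Tendsto xi (𝓝[<] b) atTop) :
    ∃ M > 0, ∃ t₁ ∈ Ico a b, ∀ t ∈ Ico t₁ b,
      0 ≤ xi t ∧ 0 < m1 t / 2 - p t ∧ |xi t - (m1 t / 2 - p t) ^ 2| ≤ M := by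
  obtain ⟨L, B, hL, hB, hbound⟩ := h.exists_bound
  obtain ⟨t₁, ht₁, hlarge⟩ := exists_Ico_forall_ge_of_tendsto hab hcoll (258 + 2 * L + 4 * B)
  have hsub : Ico t₁ b ⊆ Ico a b := Ico_subset_Ico_left ht₁.1
  have hbd : ∀ t ∈ Ico t₁ b, _ := fun t ht => hbound t (hsub ht)
  have hxi₁ : ∀ t ∈ Ico t₁ b, 1 ≤ xi t := fun t ht => by linarith [hlarge t ht]
  have hs : ∀ t ∈ Ico t₁ b, 1 < m1 t / 2 - p t := by
    refine forall_one_lt_of_tendsto_atTop (B := B) (fun t ht => h.hasDerivAt_s (hsub ht))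
      (fun t ht => h.hasDerivAt_xi' (hsub ht)) hcoll hxi₁ (fun t ht => ?_)
      (fun t ht h₈ h₁ => ?_) (fun t ht => ?_)
    · nlinarith [(abs_le.1 (hbd t ht).2.2.2).2, sq_nonneg (m3 t * xi t - m2 t / 2)]
    · exact sDeriv_le_neg_sq_div_two (s := m1 t / 2 - p t) (hbd t ht).2.1 (hbd t ht).2.2.1 hB
        (hlarge t ht) (by linarith [(abs_le.1 (hbd t ht).2.2.2).1]) (by nlinarith)
    · exact sDeriv_le_two_mul_sq (hbd t ht).2.1 (hbd t ht).2.2.1 (by linarith [hlarge t ht])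
  have hv : ∀ t ∈ Ico t₁ b, (m3 t * xi t - m2 t / 2) ^ 2 < 1 := by
    refine forall_lt_one_of_tendsto_atTop (fun t ht => h.hasDerivAt_v_sq (hsub ht))
      (fun t ht => h.hasDerivAt_xi' (hsub ht)) hcoll hxi₁ (fun t ht => by linarith [hs t ht])
      (fun t ht => ?_) (fun t ht hv₁ => ?_)
    · nlinarith [(abs_le.1 (hbd t ht).2.2.2).2, hlarge t ht, sq_nonneg (m1 t / 2 - p t)]
    · exact mul_le_vSqDeriv (hbd t ht).1 (hbd t ht).2.2.1 (by linarith [hlarge t ht])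
        (hs t ht).le hv₁
  refine ⟨B + 1, by positivity, t₁, ht₁, fun t ht =>
    ⟨by linarith [hxi₁ t ht], by linarith [hs t ht], ?_⟩⟩
  have := abs_le.1 (hbd t ht).2.2.2
  rw [abs_le]
  constructor <;> nlinarith [hv t ht, sq_nonneg (m3 t * xi t - m2 t / 2)]

end IsReducedTwoBodySolution

/-- Along a collision solution with `t* < ∞` and `ξ(t) → +∞` as `t → t*⁻`, `p` has
the expansion `p = m₁/2 − √ξ·(1 + O(1/ξ))`: there are `M > 0` and `t₁ ∈ [t₀, t*)` with
`|p(t) − m₁(t)/2 + √(ξ(t))|·√(ξ(t)) ≤ M` on `[t₁, t*)`. -/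
theorem p_asymptotic_expansion
    (t0 tstar : ℝ) (ht0 : t0 < tstar)
    (m1 m2 m3 xi p : ℝ → ℝ)
    (hm1 : ∀ t ∈ Set.Ico t0 tstar,
      HasDerivAt m1 (xi t * (-(m2 t)^2 + (m3 t)^2 + 2 * m2 t * m3 t * xi t)) t)
    (hm2 : ∀ t ∈ Set.Ico t0 tstar,
      HasDerivAt m2 (m1 t * m2 t * xi t - m3 t * p t - 2 * m1 t * m3 t * (xi t)^2) t)
    (hm3 : ∀ t ∈ Set.Ico t0 tstar,
      HasDerivAt m3 (m2 t * p t - m1 t * m3 t * xi t) t)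
    (hxi : ∀ t ∈ Set.Ico t0 tstar,
      HasDerivAt xi (-((xi t)^2 + 1) * (2 * p t - m1 t)) t)
    (hp : ∀ t ∈ Set.Ico t0 tstar,
      HasDerivAt p (-((xi t)^2 + 1) * (1 + m2 t * m3 t - 2 * (m3 t)^2 * xi t)) t)
    (hcoll : Tendsto xi (nhdsWithin tstar (Set.Iio tstar)) atTop) :
    ∃ M > (0 : ℝ), ∃ t1 ∈ Set.Ico t0 tstar,
      ∀ t ∈ Set.Ico t1 tstar,
        |p t - m1 t / 2 + Real.sqrt (xi t)| * Real.sqrt (xi t) ≤ M := by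
  have h : IsReducedTwoBodySolution t0 tstar m1 m2 m3 xi p := ⟨hm1, hm2, hm3, hxi, hp⟩
  obtain ⟨M, hM, t1, ht1, hbound⟩ := h.exists_abs_sub_sq_le ht0 hcoll
  refine ⟨M, hM, t1, ht1, fun t ht => ?_⟩
  obtain ⟨hxi₀, hs, hsq⟩ := hbound t ht
  rw [show p t - m1 t / 2 + √(xi t) = √(xi t) - (m1 t / 2 - p t) by ring]
  exact abs_sqrt_sub_mul_sqrt_le hxi₀ hs.le hsq
end
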